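/- Let l be a positive integer. The group Γ_{2l,π} is torsion-free: if γ ∈ Γ_{2l,π} satisfies γ^m = id for some positive integer m, then γ = id. -/

import Mathlib

noncomputable section

abbrev H3 := ℝ × ℝ × ℝ

/-- polarized Heisenberg multiplication -/
def Hmul (a b : H3) : H3 := (a.1 + b.1, a.2.1 + b.2.1, a.2.2 + b.2.2 + a.1 * b.2.1)

/-- left translation L_γ : h ↦ γ ⋆ h as a bijection of ℍ -/
def Ltrans (γ : H3) : Equiv.Perm H3 where
  toFun x := Hmul γ x
  invFun x := (x.1 - γ.1, x.2.1 - γ.2.1, x.2.2 - γ.2.2 - γ.1 * (x.2.1 - γ.2.1))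
  left_inv := by
    rintro ⟨a, b, c⟩
    simp only [Hmul, Prod.mk.injEq]
    refine ⟨by ring, by ring, by ring⟩
  right_inv := by
    rintro ⟨a, b, c⟩
    simp only [Hmul, Prod.mk.injEq]
    refine ⟨by ring, by ring, by ring⟩

/-- the map φ(p,q,s) = (−p, −q, s + 1/2) as a bijection of ℍ -/
def phiPerm : Equiv.Perm H3 where
  toFun x := (-x.1, -x.2.1, x.2.2 + 1 / 2)
  invFun x := (-x.1, -x.2.1, x.2.2 - 1 / 2)
  left_inv := by
    rintro ⟨a, b, c⟩
    simp only [Prod.mk.injEq]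
    refine ⟨by ring, by ring, by ring⟩
  right_inv := by
    rintro ⟨a, b, c⟩
    simp only [Prod.mk.injEq]
    refine ⟨by ring, by ring, by ring⟩

/-- the lattice N_{2l} = ℤ × 2lℤ × ℤ -/
def N2l (l : ℕ) : Set H3 :=
  {x | ∃ a b c : ℤ, x = ((a : ℝ), 2 * (l : ℝ) * (b : ℝ), (c : ℝ))}

/-- the Heisenberg Bieberbach group Γ_{2l,π}, generated by translations by N_{2l} and φ -/
def Gamma2lpi (l : ℕ) : Subgroup (Equiv.Perm H3) :=
  Subgroup.closure ((Ltrans '' N2l l) ∪ {phiPerm})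

/-!
Every element of Γ_{2l,π} is either a translation `L_v` or a twisted translation `L_v ∘ φ`
with `v ∈ N_{2l}`. A translation of finite order is trivial because the Heisenberg group is
torsion-free. A twisted translation squares to the central translation by
`2s + 1 - pq`, which is an odd integer for `v = (p, q, s) ∈ N_{2l}` (as `q` is even),
so no power of it is the identity.
-/

def Hinv (v : H3) : H3 := (-v.1, -v.2.1, -v.2.2 + v.1 * v.2.1)

/-- The automorphism of `ℍ` by which conjugation with `φ` acts on translations. -/
def rotPi (v : H3) : H3 := (-v.1, -v.2.1, v.2.2)

lemma Ltrans_apply (v x : H3) : Ltrans v x = Hmul v x := rfl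

lemma phiPerm_apply (x : H3) : phiPerm x = (-x.1, -x.2.1, x.2.2 + 1 / 2) := rfl

lemma Ltrans_mul (u v : H3) : Ltrans u * Ltrans v = Ltrans (Hmul u v) := by
  ext ⟨p, q, s⟩ <;> simp only [Equiv.Perm.mul_apply, Ltrans_apply, Hmul] <;> ring

lemma Ltrans_zero : Ltrans 0 = 1 := by
  ext ⟨p, q, s⟩ <;> simp [Ltrans_apply, Hmul]

lemma Ltrans_inv (v : H3) : (Ltrans v)⁻¹ = Ltrans (Hinv v) := by
  rw [inv_eq_iff_mul_eq_one, Ltrans_mul, ← Ltrans_zero]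
  congr 1
  ext <;> simp only [Hmul, Hinv, Prod.fst_zero, Prod.snd_zero] <;> ring

lemma phiPerm_mul_Ltrans (v : H3) : phiPerm * Ltrans v = Ltrans (rotPi v) * phiPerm := by
  ext ⟨p, q, s⟩ <;>
    simp only [Equiv.Perm.mul_apply, Ltrans_apply, phiPerm_apply, Hmul, rotPi] <;> ring

lemma phiPerm_mul_self : phiPerm * phiPerm = Ltrans (0, 0, 1) := by
  ext ⟨p, q, s⟩ <;> simp only [Equiv.Perm.mul_apply, Ltrans_apply, phiPerm_apply, Hmul] <;> ring

lemma phiPerm_inv : phiPerm⁻¹ = Ltrans (0, 0, -1) * phiPerm := by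
  rw [inv_eq_iff_mul_eq_one, ← mul_assoc, phiPerm_mul_Ltrans, mul_assoc, phiPerm_mul_self,
    Ltrans_mul, ← Ltrans_zero]
  congr 1
  ext <;> simp [Hmul, rotPi]

lemma Ltrans_mul_phiPerm_sq (v : H3) :
    (Ltrans v * phiPerm) ^ 2 = Ltrans (0, 0, 2 * v.2.2 + 1 - v.1 * v.2.1) := by
  rw [sq, mul_assoc, ← mul_assoc phiPerm, phiPerm_mul_Ltrans, mul_assoc, phiPerm_mul_self,
    ← mul_assoc, Ltrans_mul, Ltrans_mul]
  congr 1
  ext <;> simp only [Hmul, rotPi] <;> ring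

lemma Ltrans_pow_apply_zero (v : H3) (m : ℕ) :
    (Ltrans v ^ m) 0 = (m * v.1, m * v.2.1, m * v.2.2 + m * (m - 1) / 2 * (v.1 * v.2.1)) := by
  induction m with
  | zero => simp; rfl
  | succ n ih =>
    rw [pow_succ', Equiv.Perm.mul_apply, ih, Ltrans_apply]
    ext <;> simp only [Hmul] <;> push_cast <;> ring

lemma eq_zero_of_Ltrans_pow_eq_one {v : H3} {m : ℕ} (hm : 0 < m) (h : Ltrans v ^ m = 1) :
    v = 0 := by
  have hm' : (m : ℝ) ≠ 0 := by positivity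
  have h0 := Ltrans_pow_apply_zero v m
  rw [h, Equiv.Perm.one_apply] at h0
  simp only [Prod.ext_iff, Prod.fst_zero, Prod.snd_zero] at h0
  obtain ⟨hp, hq, hs⟩ := h0
  have hp : v.1 = 0 := (mul_eq_zero.mp hp.symm).resolve_left hm'
  have hq : v.2.1 = 0 := (mul_eq_zero.mp hq.symm).resolve_left hm'
  rw [hp, zero_mul, mul_zero, add_zero] at hs
  have hs : v.2.2 = 0 := (mul_eq_zero.mp hs.symm).resolve_left hm'
  ext <;> assumption

section Lattice

variable {l : ℕ}

lemma zero_mem_N2l : (0 : H3) ∈ N2l l := ⟨0, 0, 0, by simp; rfl⟩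

lemma central_mem_N2l (c : ℤ) : ((0 : ℝ), (0 : ℝ), (c : ℝ)) ∈ N2l l := ⟨0, 0, c, by simp⟩

lemma Hmul_mem_N2l {u v : H3} (hu : u ∈ N2l l) (hv : v ∈ N2l l) : Hmul u v ∈ N2l l := by
  obtain ⟨a, b, c, rfl⟩ := hu
  obtain ⟨a', b', c', rfl⟩ := hv
  exact ⟨a + a', b + b', c + c' + a * (2 * l * b'), by ext <;> simp only [Hmul] <;> push_cast <;> ring⟩

lemma Hinv_mem_N2l {v : H3} (hv : v ∈ N2l l) : Hinv v ∈ N2l l := by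
  obtain ⟨a, b, c, rfl⟩ := hv
  exact ⟨-a, -b, -c + a * (2 * l * b), by ext <;> simp only [Hinv] <;> push_cast <;> ring⟩

lemma rotPi_mem_N2l {v : H3} (hv : v ∈ N2l l) : rotPi v ∈ N2l l := by
  obtain ⟨a, b, c, rfl⟩ := hv
  exact ⟨-a, -b, c, by ext <;> simp only [rotPi] <;> push_cast <;> ring⟩

lemma twist_ne_zero_of_mem_N2l {v : H3} (hv : v ∈ N2l l) : 2 * v.2.2 + 1 - v.1 * v.2.1 ≠ 0 := by
  obtain ⟨a, b, c, rfl⟩ := hv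
  have hodd : (2 * (c - a * l * b) + 1 : ℤ) ≠ 0 := by omega
  convert (Int.cast_ne_zero (α := ℝ)).mpr hodd using 1
  push_cast
  ring

end Lattice

lemma exists_eq_Ltrans_or_eq_Ltrans_mul_phiPerm {l : ℕ} {g : Equiv.Perm H3}
    (hg : g ∈ Gamma2lpi l) :
    ∃ v ∈ N2l l, g = Ltrans v ∨ g = Ltrans v * phiPerm := by
  induction hg using Subgroup.closure_induction'' with
  | mem g hg =>
    rcases hg with ⟨v, hv, rfl⟩ | rfl
    · exact ⟨v, hv, .inl rfl⟩
    · exact ⟨0, zero_mem_N2l, .inr (by rw [Ltrans_zero, one_mul])⟩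
  | inv_mem g hg =>
    rcases hg with ⟨v, hv, rfl⟩ | rfl
    · exact ⟨Hinv v, Hinv_mem_N2l hv, .inl (Ltrans_inv v)⟩
    · exact ⟨_, by exact_mod_cast central_mem_N2l (-1), .inr phiPerm_inv⟩
  | one => exact ⟨0, zero_mem_N2l, .inl Ltrans_zero.symm⟩
  | mul g h _ _ ihg ihh =>
    obtain ⟨u, hu, rfl | rfl⟩ := ihg <;> obtain ⟨v, hv, rfl | rfl⟩ := ihh
    · exact ⟨_, Hmul_mem_N2l hu hv, .inl (Ltrans_mul u v)⟩
    · exact ⟨_, Hmul_mem_N2l hu hv, .inr (by rw [← mul_assoc, Ltrans_mul])⟩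
    · refine ⟨_, Hmul_mem_N2l hu (rotPi_mem_N2l hv), .inr ?_⟩
      rw [mul_assoc, phiPerm_mul_Ltrans, ← mul_assoc, Ltrans_mul]
    · refine ⟨_, Hmul_mem_N2l (Hmul_mem_N2l hu (rotPi_mem_N2l hv))
        (by exact_mod_cast central_mem_N2l 1), .inl ?_⟩
      rw [mul_assoc, ← mul_assoc phiPerm, phiPerm_mul_Ltrans, mul_assoc, phiPerm_mul_self,
        ← mul_assoc, Ltrans_mul, Ltrans_mul]

theorem Gamma2lpi_torsionFree_general (l : ℕ) :
    ∀ γ ∈ Gamma2lpi l, ∀ m : ℕ, 0 < m → γ ^ m = 1 → γ = 1 := by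
  intro γ hγ m hm hγm
  obtain ⟨v, hv, rfl | rfl⟩ := exists_eq_Ltrans_or_eq_Ltrans_mul_phiPerm hγ
  · rw [eq_zero_of_Ltrans_pow_eq_one hm hγm, Ltrans_zero]
  · have hcentral : Ltrans (0, 0, 2 * v.2.2 + 1 - v.1 * v.2.1) ^ m = 1 := by
      rw [← Ltrans_mul_phiPerm_sq, ← pow_mul, mul_comm, pow_mul, hγm, one_pow]
    have := congrArg (·.2.2) (eq_zero_of_Ltrans_pow_eq_one hm hcentral)
    exact absurd this (twist_ne_zero_of_mem_N2l hv)

/-- the group Γ_{2l,π} is torsion-free. -/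
theorem Gamma2lpi_torsionFree (l : ℕ) (hl : 0 < l) :
    ∀ γ ∈ Gamma2lpi l, ∀ m : ℕ, 0 < m → γ ^ m = 1 → γ = 1 :=
  Gamma2lpi_torsionFree_general l

end
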